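/- If φ: G → A is a group homomorphism into an R-closed group A, then every R-invisible subgroup N of G is contained in the kernel of φ. -/

import Mathlib

open scoped TensorProduct

/-- The set of denominators of (reduced fractional expressions of) elements of `R ⊆ ℚ`. -/
def DR (R : Subring ℚ) : Set ℕ := {d | ∃ q ∈ R, q.den = d}

variable {G H A : Type*} [Group G] [Group H] [Group A]

/-- Evaluation of a monomial over `G` in `n` indeterminates at a tuple of elements of `G`. -/
noncomputable def evalWord {n : ℕ} (g : Fin n → G) :
    Monoid.Coprod G (FreeGroup (Fin n)) →* G :=
  Monoid.Coprod.lift (MonoidHom.id G) (FreeGroup.lift g)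

/-- The projection `G * F → F → F/[F,F]`. -/
noncomputable def toFreeAb (G : Type*) [Group G] (n : ℕ) :
    Monoid.Coprod G (FreeGroup (Fin n)) →* Abelianization (FreeGroup (Fin n)) :=
  Monoid.Coprod.lift 1 Abelianization.of

/-- An `R`-nullhomologous system of equations `xᵢ^e = wᵢ(x₁,…,xₙ)` over `G`. -/
structure NullSys (R : Subring ℚ) (G : Type*) [Group G] where
  n : ℕ
  e : ℕ
  he : e ∈ DR R
  w : Fin n → Monoid.Coprod G (FreeGroup (Fin n))
  nullh : ∀ i, toFreeAb G n (w i) = 1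

/-- A solution of a system of equations over `G`. -/
def NullSys.IsSolution {R : Subring ℚ} (S : NullSys R G) (g : Fin S.n → G) : Prop :=
  ∀ i, (g i) ^ S.e = evalWord g (S.w i)

/-- A group is `R`-closed if every `R`-nullhomologous system over it has a unique solution. -/
def IsRClosed (R : Subring ℚ) (A : Type*) [Group A] : Prop :=
  ∀ S : NullSys R A, ∃! g : Fin S.n → A, S.IsSolution g

/-- A normal subgroup `N ≤ G` is `R`-invisible if it is normally finitely generated and every
element of `N/[G,N]` has (finite) order lying in `D_R`. -/
def IsRInvisible (R : Subring ℚ) {G : Type*} [Group G] (N : Subgroup G) : Prop :=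
  N.Normal ∧
  (∃ s : Finset G, ↑s ⊆ (N : Set G) ∧ Subgroup.normalClosure ↑s = N) ∧
  ∀ x ∈ N, ∃ e ∈ DR R, x ^ e ∈ ⁅(⊤ : Subgroup G), N⁆

/-!
Write `N` as the normal closure of `g₁, …, gₙ` and pick one `e ∈ D_R` with `gᵢ ^ e ∈ [G, N]` for
all `i`. In `G * F(x₁, …, xₙ)` the kernel `K` of `xᵢ ↦ 1` maps onto a normal subgroup containing
`N` under `xᵢ ↦ gᵢ`, so each `gᵢ ^ e` is the image of some `wᵢ ∈ [G * F, K]`; such a word is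
nullhomologous and evaluates to `1` at `x = 1`. Pushed to `A` along `φ`, the system
`xᵢ ^ e = wᵢ` is solved both by `φ gᵢ` and by `1`, so uniqueness gives `φ gᵢ = 1`.
-/

open Subgroup Monoid.Coprod

lemma one_mem_DR (R : Subring ℚ) : 1 ∈ DR R := ⟨0, R.zero_mem, rfl⟩

lemma Subring.inv_den_mem {R : Subring ℚ} {q : ℚ} (hq : q ∈ R) : (q.den : ℚ)⁻¹ ∈ R := by
  -- Bézout: `1 = num * a + den * b`, so `1 / den = q * a + b`.
  have hbezout := Int.gcd_eq_gcd_ab q.num q.den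
  rw [show Int.gcd q.num q.den = 1 from q.reduced] at hbezout
  have hden : (q.den : ℚ)⁻¹ = q * q.num.gcdA q.den + q.num.gcdB q.den := by
    refine (eq_inv_of_mul_eq_one_left ?_).symm
    have hbezout' : (1 : ℚ) = q.num * q.num.gcdA q.den + q.den * q.num.gcdB q.den := by
      exact_mod_cast hbezout
    linear_combination (q.num.gcdA q.den : ℚ) * Rat.mul_den_eq_num q - hbezout'
  rw [hden]
  exact add_mem (mul_mem hq (intCast_mem R _)) (intCast_mem R _)

lemma mul_mem_DR {R : Subring ℚ} {d₁ d₂ : ℕ} (h₁ : d₁ ∈ DR R) (h₂ : d₂ ∈ DR R) :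
    d₁ * d₂ ∈ DR R := by
  obtain ⟨q₁, hq₁, rfl⟩ := h₁
  obtain ⟨q₂, hq₂, rfl⟩ := h₂
  refine ⟨((q₁.den * q₂.den : ℕ) : ℚ)⁻¹, ?_, Rat.inv_natCast_den_of_pos (by positivity)⟩
  rw [Nat.cast_mul, mul_inv]
  exact mul_mem (R.inv_den_mem hq₁) (R.inv_den_mem hq₂)

lemma exists_mem_DR_forall_pow_mem {R : Subring ℚ} {ι : Type*} [Fintype ι] {K : Subgroup G}
    {x : ι → G} (h : ∀ i, ∃ e ∈ DR R, x i ^ e ∈ K) : ∃ e ∈ DR R, ∀ i, x i ^ e ∈ K := by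
  choose e he hxe using h
  refine ⟨∏ i, e i, Finset.prod_induction _ (· ∈ DR R) (fun _ _ => mul_mem_DR) (one_mem_DR R)
    fun i _ => he i, fun i => ?_⟩
  obtain ⟨c, hc⟩ := Finset.dvd_prod_of_mem e (Finset.mem_univ i)
  rw [hc, pow_mul]
  exact K.pow_mem (hxe i) c

section evalWord

variable {n : ℕ}

@[simp]
lemma evalWord_inr_of (g : Fin n → G) (i : Fin n) : evalWord g (inr (FreeGroup.of i)) = g i := by
  simp [evalWord]

lemma evalWord_map (φ : G →* A) (g : Fin n → G) (w : Monoid.Coprod G (FreeGroup (Fin n))) :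
    evalWord (φ ∘ g) (map φ (MonoidHom.id _) w) = φ (evalWord g w) := by
  rw [← MonoidHom.comp_apply, ← MonoidHom.comp_apply]
  congr 1
  apply hom_ext <;> ext <;> simp [evalWord]

lemma toFreeAb_map (φ : G →* A) (w : Monoid.Coprod G (FreeGroup (Fin n))) :
    toFreeAb A n (map φ (MonoidHom.id _) w) = toFreeAb G n w := by
  rw [← MonoidHom.comp_apply]
  congr 1
  apply hom_ext <;> ext <;> simp [toFreeAb]

lemma evalWord_surjective (g : Fin n → G) : Function.Surjective (evalWord g) :=
  fun a => ⟨inl a, rfl⟩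

lemma normalClosure_range_le_map_ker (g : Fin n → G) :
    normalClosure (Set.range g) ≤ (evalWord 1).ker.map (evalWord g) := by
  have : ((evalWord 1).ker.map (evalWord g)).Normal :=
    (evalWord 1).normal_ker.map _ (evalWord_surjective g)
  refine normalClosure_le_normal ?_
  rintro _ ⟨i, rfl⟩
  exact ⟨inr (FreeGroup.of i), by simp, by simp⟩

lemma commutator_normalClosure_range_le_map (g : Fin n → G) :
    ⁅(⊤ : Subgroup G), normalClosure (Set.range g)⁆ ≤
      ((toFreeAb G n).ker ⊓ (evalWord 1).ker).map (evalWord g) := by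
  calc ⁅(⊤ : Subgroup G), normalClosure (Set.range g)⁆
      ≤ ⁅(⊤ : Subgroup (Monoid.Coprod G (FreeGroup (Fin n)))).map (evalWord g),
          (evalWord 1).ker.map (evalWord g)⁆ := by
        rw [map_top_of_surjective _ (evalWord_surjective g)]
        exact commutator_mono le_rfl (normalClosure_range_le_map_ker g)
    _ = ⁅⊤, (evalWord 1).ker⁆.map (evalWord g) := (map_commutator _ _ _).symm
    _ ≤ _ := map_mono (le_inf ?_ (commutator_le_right _ _))
  calc ⁅⊤, (evalWord 1).ker⁆ ≤ commutator _ := commutator_mono le_rfl le_top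
    _ ≤ (toFreeAb G n).ker := Abelianization.commutator_subset_ker _

end evalWord

noncomputable def NullSys.map {R : Subring ℚ} (φ : G →* A) (S : NullSys R G) : NullSys R A where
  n := S.n
  e := S.e
  he := S.he
  w i := Monoid.Coprod.map φ (MonoidHom.id _) (S.w i)
  nullh i := (toFreeAb_map φ (S.w i)).trans (S.nullh i)

lemma NullSys.IsSolution.map {R : Subring ℚ} {S : NullSys R G} {g : Fin S.n → G}
    (hg : S.IsSolution g) (φ : G →* A) : (S.map φ).IsSolution (φ ∘ g) := fun i => by
  change φ (g i) ^ S.e = evalWord (φ ∘ g) (Monoid.Coprod.map φ (MonoidHom.id _) (S.w i))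
  rw [evalWord_map, ← hg i, map_pow]

lemma IsRClosed.comp_eq_of_isSolution {R : Subring ℚ} (hA : IsRClosed R A) (φ : G →* A)
    {S : NullSys R G} {g g' : Fin S.n → G} (hg : S.IsSolution g) (hg' : S.IsSolution g') :
    φ ∘ g = φ ∘ g' :=
  (hA (S.map φ)).unique (hg.map φ) (hg'.map φ)

/-- Every `R`-invisible subgroup of `G` is killed by any homomorphism into an `R`-closed
group. -/
theorem rInvisible_le_ker_of_isRClosed (R : Subring ℚ) {G A : Type*} [Group G] [Group A]
    (φ : G →* A) (hA : IsRClosed R A) (N : Subgroup G) (hN : IsRInvisible R N) :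
    N ≤ φ.ker := by
  obtain ⟨-, ⟨s, -, hs⟩, hpow⟩ := hN
  set g : Fin s.card → G := Subtype.val ∘ s.equivFin.symm
  have hg : normalClosure (Set.range g) = N := by
    simp [g, Set.range_comp, hs]
  obtain ⟨e, he, hge⟩ := exists_mem_DR_forall_pow_mem fun i =>
    hpow (g i) (hg ▸ subset_normalClosure ⟨i, rfl⟩)
  choose w hw hwg using fun i => commutator_normalClosure_range_le_map g (hg ▸ hge i)
  let S : NullSys R G := ⟨s.card, e, he, w, fun i => (hw i).1⟩
  have hφg : φ ∘ g = φ ∘ (1 : Fin s.card → G) :=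
    hA.comp_eq_of_isSolution φ (S := S) (fun i => (hwg i).symm) fun i => by
      rw [Pi.one_apply, one_pow]
      exact (MonoidHom.mem_ker.mp (hw i).2).symm
  rw [← hg]
  refine normalClosure_le_normal ?_
  rintro _ ⟨i, rfl⟩
  simpa using congrFun hφg i
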